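/- For every natural number k, the Báez-Duarte sequence satisfies c_k = ∑_{n=1}^∞ (μ(n)/n²)(1 - 1/n²)^k, where μ is the Möbius function, and the series converges absolutely. -/
import Mathlib


open ArithmeticFunction

/-- The real value of the Riemann zeta function at a real argument. -/
noncomputable def zetaR (s : ℝ) : ℝ := (riemannZeta (s : ℂ)).re

/-- The Báez-Duarte sequence `c_k = ∑_{j=0}^k (-1)^j C(k,j) / ζ(2j+2)`. -/
noncomputable def cBD (k : ℕ) : ℝ :=
  ∑ j ∈ Finset.range (k + 1), (-1 : ℝ) ^ j * (k.choose j) / zetaR (2 * j + 2)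

lemma term_eq (m : ℕ) (n : ℕ) :
    LSeries.term (fun n => ((moebius n : ℤ) : ℂ)) (m : ℂ) n
      = (((if n = 0 then 0 else ((moebius n : ℤ) : ℝ) / (n : ℝ) ^ m) : ℝ) : ℂ) := by
  rcases eq_or_ne n 0 with rfl | hn
  · simp
  · simp only [LSeries.term_of_ne_zero hn, hn, if_neg hn, Complex.cpow_natCast]
    push_cast
    ring

lemma moebius_tsum (m : ℕ) (hm : 2 ≤ m) :
    Summable (fun n : ℕ => ((moebius (n+1) : ℤ) : ℝ) / ((n:ℝ)+1) ^ m) ∧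
    (∑' n : ℕ, ((moebius (n+1) : ℤ) : ℝ) / ((n:ℝ)+1) ^ m) = 1 / zetaR m := by
  have hre : 1 < ((m : ℂ)).re := by
    simp only [Complex.natCast_re]
    exact_mod_cast hm.trans_lt' one_lt_two
  have hsum : LSeriesSummable (fun n => ((moebius n : ℤ) : ℂ)) (m : ℂ) := by
    have := (LSeriesSummable_moebius_iff (s := (m : ℂ))).mpr hre
    exact this
  set g : ℕ → ℝ := fun n => if n = 0 then 0 else ((moebius n : ℤ) : ℝ) / (n : ℝ) ^ m with hg
  have hterm : ∀ n, LSeries.term (fun n => ((moebius n : ℤ) : ℂ)) (m : ℂ) n = ((g n : ℝ) : ℂ) := term_eq m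
  have hgsum : Summable g := by
    rw [← Complex.summable_ofReal]
    exact hsum.congr fun n => (hterm n)
  have hL : LSeries (fun n => ((moebius n : ℤ) : ℂ)) (m : ℂ) = (((∑' n, g n) : ℝ) : ℂ) := by
    rw [LSeries, Complex.ofReal_tsum]
    exact tsum_congr hterm
  have hzne : riemannZeta (m : ℂ) ≠ 0 := riemannZeta_ne_zero_of_one_lt_re hre
  have hmul : riemannZeta (m : ℂ) * (((∑' n, g n) : ℝ) : ℂ) = 1 := by
    rw [← hL, ← LSeries_one_eq_riemannZeta hre]
    exact LSeries_one_mul_Lseries_moebius hre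
  have hSne : (∑' n, g n) ≠ 0 := by
    intro h
    rw [h] at hmul
    simp at hmul
  have hzeta : riemannZeta (m : ℂ) = (((∑' n, g n)⁻¹ : ℝ) : ℂ) := by
    rw [Complex.ofReal_inv]
    exact eq_inv_of_mul_eq_one_left (mul_comm (riemannZeta (m : ℂ)) _ ▸ hmul)
  have hzetaR : zetaR m = (∑' n, g n)⁻¹ := by
    rw [zetaR]
    push_cast
    rw [hzeta, Complex.ofReal_re]
  have hshift : (∑' n : ℕ, ((moebius (n+1) : ℤ) : ℝ) / ((n:ℝ)+1) ^ m) = ∑' n, g n := by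
    rw [Summable.tsum_eq_zero_add hgsum]
    simp only [hg, if_pos rfl, zero_add]
    refine tsum_congr fun n => ?_
    simp only [Nat.succ_ne_zero, if_neg (Nat.succ_ne_zero n)]
    push_cast
    ring_nf
  constructor
  · rw [← summable_nat_add_iff 1] at hgsum
    refine hgsum.congr fun n => ?_
    simp only [hg, if_neg (Nat.succ_ne_zero n)]
    push_cast
    ring_nf
  · rw [hshift, hzetaR, one_div, inv_inv]

theorem stmt2 (k : ℕ) :
    Summable (fun n : ℕ =>
      |((moebius (n + 1) : ℤ) : ℝ) / ((n : ℝ) + 1) ^ 2 * (1 - 1 / ((n : ℝ) + 1) ^ 2) ^ k|) ∧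
    cBD k = ∑' n : ℕ,
      ((moebius (n + 1) : ℤ) : ℝ) / ((n : ℝ) + 1) ^ 2 * (1 - 1 / ((n : ℝ) + 1) ^ 2) ^ k := by
  -- basic facts about the base
  have hy : ∀ n : ℕ, (1:ℝ) ≤ ((n : ℝ) + 1) ^ 2 := by
    intro n
    have h0 : (0:ℝ) ≤ (n : ℝ) := Nat.cast_nonneg n
    nlinarith
  have hypos : ∀ n : ℕ, (0:ℝ) < ((n : ℝ) + 1) ^ 2 := fun n => by positivity
  -- summability
  have hmaj : Summable (fun n : ℕ => 1 / ((n : ℝ) + 1) ^ 2) := by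
    have := Real.summable_one_div_nat_pow.mpr (by norm_num : 1 < 2)
    have h2 := (summable_nat_add_iff (f := fun n : ℕ => 1 / (n : ℝ) ^ 2) 1).mpr this
    refine h2.congr fun n => ?_
    push_cast
    ring_nf
  have hbound : ∀ n : ℕ,
      |((moebius (n + 1) : ℤ) : ℝ) / ((n : ℝ) + 1) ^ 2 * (1 - 1 / ((n : ℝ) + 1) ^ 2) ^ k|
        ≤ 1 / ((n : ℝ) + 1) ^ 2 := by
    intro n
    have h1 : |((moebius (n + 1) : ℤ) : ℝ)| ≤ 1 := by
      have := abs_moebius_le_one (n := n + 1)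
      exact_mod_cast this
    have hx0 : (0:ℝ) ≤ 1 / ((n : ℝ) + 1) ^ 2 := by positivity
    have hx1 : 1 / ((n : ℝ) + 1) ^ 2 ≤ 1 := by
      rw [div_le_one (hypos n)]; exact hy n
    have h2 : |(1 - 1 / ((n : ℝ) + 1) ^ 2) ^ k| ≤ 1 := by
      rw [abs_pow]
      exact pow_le_one₀ (abs_nonneg _) (abs_le.mpr ⟨by linarith, by linarith⟩)
    calc |((moebius (n + 1) : ℤ) : ℝ) / ((n : ℝ) + 1) ^ 2 * (1 - 1 / ((n : ℝ) + 1) ^ 2) ^ k|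
        = |((moebius (n + 1) : ℤ) : ℝ)| / ((n : ℝ) + 1) ^ 2
            * |(1 - 1 / ((n : ℝ) + 1) ^ 2) ^ k| := by
          rw [abs_mul, abs_div, abs_of_pos (hypos n)]
      _ ≤ 1 / ((n : ℝ) + 1) ^ 2 * 1 := by gcongr
      _ = 1 / ((n : ℝ) + 1) ^ 2 := by ring
  have hsummAbs : Summable (fun n : ℕ =>
      |((moebius (n + 1) : ℤ) : ℝ) / ((n : ℝ) + 1) ^ 2 * (1 - 1 / ((n : ℝ) + 1) ^ 2) ^ k|) :=
    Summable.of_nonneg_of_le (fun n => abs_nonneg _) hbound hmaj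
  refine ⟨hsummAbs, ?_⟩
  -- the family of inner functions
  set f : ℕ → ℕ → ℝ := fun j n =>
    (-1 : ℝ) ^ j * (k.choose j) * (((moebius (n+1) : ℤ) : ℝ) / ((n:ℝ)+1) ^ (2*j+2)) with hf
  have hfs : ∀ j ∈ Finset.range (k+1), Summable (f j) := by
    intro j _
    exact ((moebius_tsum (2*j+2) (by omega)).1).mul_left _
  have htermcalc : ∀ j ∈ Finset.range (k+1),
      (-1 : ℝ) ^ j * (k.choose j) / zetaR (2 * (j:ℝ) + 2) = ∑' n, f j n := by
    intro j _
    obtain ⟨hs, he⟩ := moebius_tsum (2*j+2) (by omega)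
    have hcast : ((2*j+2 : ℕ) : ℝ) = 2 * (j:ℝ) + 2 := by push_cast; ring
    rw [← hcast, div_eq_mul_one_div, ← he, ← tsum_mul_left]
  have hpoint : ∀ n : ℕ,
      ∑ j ∈ Finset.range (k+1), f j n
        = ((moebius (n + 1) : ℤ) : ℝ) / ((n : ℝ) + 1) ^ 2 * (1 - 1 / ((n : ℝ) + 1) ^ 2) ^ k := by
    intro n
    set y : ℝ := ((n:ℝ)+1)^2 with hydef
    have hyne : y ≠ 0 := ne_of_gt (hypos n)
    have hbin : (1 - 1/y) ^ k
        = ∑ j ∈ Finset.range (k+1), (-1/y) ^ j * (k.choose j) := by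
      rw [show (1 : ℝ) - 1/y = (-1/y) + 1 by ring, add_pow]
      exact Finset.sum_congr rfl fun j _ => by rw [one_pow, mul_one]
    rw [hbin, Finset.mul_sum]
    refine Finset.sum_congr rfl fun j _ => ?_
    have hpow : ((n:ℝ)+1) ^ (2*j+2) = y ^ (j+1) := by
      rw [hydef, ← pow_mul]
      ring_nf
    rw [hf]
    simp only [hpow]
    rw [div_pow, neg_one_pow_eq_pow_mod_two]
    field_simp
    ring
  calc cBD k = ∑ j ∈ Finset.range (k+1), ∑' n, f j n := by
        rw [cBD]
        exact Finset.sum_congr rfl htermcalc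
    _ = ∑' n, ∑ j ∈ Finset.range (k+1), f j n := (Summable.tsum_finsetSum hfs).symm
    _ = _ := tsum_congr hpoint
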